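/- Let A be a T-brace and let n be a natural number. Then for every a ∈ ζ_n(⋆,A), the subbrace br(a) generated by a is an ideal of A. -/

import Mathlib

/-!
Basic theory of left braces (skew left braces of abelian type), following
Dixon–Kurdachenko–Subbotin, "On the structure of braces whose subideals are ideals".
-/

universe u v

/-- A left brace: an abelian group `(A,+)`, a group `(A,·)`, satisfying
`a(b+c) = ab + ac - a`.  (The additive and multiplicative identities then coincide.) -/
class LeftBrace (A : Type u) extends AddCommGroup A, Group A where
  mul_add_eq : ∀ a b c : A, a * (b + c) = a * b + a * c - a

namespace LeftBrace

variable {A : Type u} [LeftBrace A]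

/-- The star operation `a ⋆ b = ab - a - b`. -/
def bstar (a b : A) : A := a * b - a - b

/-- A subset of a left brace is a subbrace if it is closed under the additive-group
and multiplicative-group operations (equivalently, it is a left brace under the
restricted operations). -/
structure IsSubbrace (S : Set A) : Prop where
  zero_mem : (0 : A) ∈ S
  add_mem : ∀ {a b : A}, a ∈ S → b ∈ S → a + b ∈ S
  neg_mem : ∀ {a : A}, a ∈ S → -a ∈ S
  mul_mem : ∀ {a b : A}, a ∈ S → b ∈ S → a * b ∈ S
  inv_mem : ∀ {a : A}, a ∈ S → a⁻¹ ∈ S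

/-- `I` is an ideal of the subbrace `J`: `I ⊆ J`, both are subbraces, and
`a ⋆ z, z ⋆ a ∈ I` for all `a ∈ J`, `z ∈ I`. -/
structure IsIdealIn (I J : Set A) : Prop where
  subset : I ⊆ J
  subbrace : IsSubbrace I
  ambient_subbrace : IsSubbrace J
  star_mem_left : ∀ a ∈ J, ∀ z ∈ I, bstar a z ∈ I
  star_mem_right : ∀ a ∈ J, ∀ z ∈ I, bstar z a ∈ I

/-- `I` is an ideal of the brace `A`. -/
def IsIdeal (I : Set A) : Prop := IsIdealIn I (Set.univ : Set A)

/-- `A` is a T-brace if being an ideal is a transitive relation: an ideal of an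
ideal of `A` is an ideal of `A`. -/
def IsTBrace (A : Type u) [LeftBrace A] : Prop :=
  ∀ I J : Set A, IsIdealIn I J → IsIdeal J → IsIdeal I

/-- The `⋆`-center `ζ(⋆,A) = {a | a ⋆ x = x ⋆ a = 0 for all x}`. -/
def starCenter (A : Type u) [LeftBrace A] : Set A :=
  {a : A | ∀ x : A, bstar a x = 0 ∧ bstar x a = 0}

/-- The preimage in `A` of the `⋆`-center of the quotient of `A` by (the ideal) `S`:
`a` belongs to it iff `a ⋆ x ∈ S` and `x ⋆ a ∈ S` for every `x ∈ A`. -/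
def nextCenter (A : Type u) [LeftBrace A] (S : Set A) : Set A :=
  {a : A | ∀ x : A, bstar a x ∈ S ∧ bstar x a ∈ S}

/-- The upper `⋆`-central series, indexed by naturals:
`ζ₀(⋆,A) = 0` and `ζ_{n+1}(⋆,A)/ζ_n(⋆,A) = ζ(⋆, A/ζ_n(⋆,A))`. -/
def zetaNat (A : Type u) [LeftBrace A] : ℕ → Set A
  | 0 => ({0} : Set A)
  | n + 1 => nextCenter A (zetaNat A n)

/-- The upper `⋆`-central series, indexed by ordinals (unions at limit ordinals). -/
noncomputable def zetaOrd (A : Type u) [LeftBrace A] (o : Ordinal.{v}) : Set A :=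
  Ordinal.limitRecOn o (({0} : Set A))
    (fun _ ih => nextCenter A ih)
    (fun o _ ih => ⋃ (o' : Ordinal) (h : o' < o), ih o' h)

/-- The upper `⋆`-hypercenter `ζ_∞(⋆,A)`: the final (stable) term of the upper
`⋆`-central series, i.e. the union of all its terms. -/
noncomputable def starHypercenter (A : Type u) [LeftBrace A] : Set A :=
  ⋃ o : Ordinal.{u}, zetaOrd A o

/-- `A` is `⋆`-hypercentral if `A = ζ_γ(⋆,A)` for some ordinal `γ`. -/
def IsStarHypercentral (A : Type u) [LeftBrace A] : Prop :=
  ∃ γ : Ordinal.{u}, zetaOrd A γ = (Set.univ : Set A)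

/-- `K ⋆ L`: the additive subgroup of `(A,+)` generated by all `x ⋆ y`, `x ∈ K`, `y ∈ L`. -/
def setStar (K L : Set A) : AddSubgroup A :=
  AddSubgroup.closure {z : A | ∃ x ∈ K, ∃ y ∈ L, z = bstar x y}

/-- `rightStarSeries A n = A^{(n+1)}`, where `A^{(1)} = A` and `A^{(n+1)} = A^{(n)} ⋆ A`. -/
def rightStarSeries (A : Type u) [LeftBrace A] : ℕ → Set A
  | 0 => (Set.univ : Set A)
  | n + 1 => ((setStar (rightStarSeries A n) (Set.univ : Set A) : AddSubgroup A) : Set A)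

/-- `leftStarSeries A n = A^{n+1}`, where `A^1 = A` and `A^{n+1} = A ⋆ A^n`. -/
def leftStarSeries (A : Type u) [LeftBrace A] : ℕ → Set A
  | 0 => (Set.univ : Set A)
  | n + 1 => ((setStar (Set.univ : Set A) (leftStarSeries A n) : AddSubgroup A) : Set A)

/-- `A` is Smoktunowicz-nilpotent if `A^{(n)} = A^k = 0` for some naturals `n, k`. -/
def IsSmoktunowiczNilpotent (A : Type u) [LeftBrace A] : Prop :=
  ∃ n k : ℕ, rightStarSeries A n = ({0} : Set A) ∧ leftStarSeries A k = ({0} : Set A)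

/-- The subbrace generated by a subset `M`: the intersection of all subbraces containing `M`. -/
def braceClosure (M : Set A) : Set A := ⋂₀ {S : Set A | IsSubbrace S ∧ M ⊆ S}

end LeftBrace

/-!
Write `Z_k = ζ_k(⋆,A)` and `B = br(a) ⊆ Z_n`. Since `Z_{k+1}/Z_k` is the `⋆`-center of `A/Z_k`,
every `⋆`-product with a factor in `Z_{k+1}` lies in `Z_k`; hence `B + Z_k` is an ideal of
`B + Z_{k+1}`. The chain `B = B + Z_0 ⊆ B + Z_1 ⊆ ⋯ ⊆ B + Z_n = Z_n` thus consists of successive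
ideals ending in an ideal of `A`, and transitivity of being an ideal climbs it down to `B`.
-/

open scoped Pointwise

namespace LeftBrace

variable {A : Type u} [LeftBrace A]

section Arithmetic

theorem mul_zero' (a : A) : a * 0 = a := by
  have h := mul_add_eq a 0 0
  rw [add_zero, add_sub_assoc, left_eq_add, sub_eq_zero] at h
  exact h

theorem one_eq_zero : (1 : A) = 0 := by
  simpa using (mul_zero' (1 : A)).symm

theorem zero_mul' (a : A) : 0 * a = a := by rw [← one_eq_zero, one_mul]

theorem mul_eq_bstar_add (a b : A) : a * b = bstar a b + a + b := by
  simp only [bstar]; abel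

theorem mul_add_eq_mul_add_bstar (a b c : A) : a * (b + c) = a * b + bstar a c + c := by
  simp only [bstar, mul_add_eq]; abel

theorem mul_neg' (a b : A) : a * -b = a + a - a * b := by
  have h := mul_add_eq a b (-b)
  rw [add_neg_cancel, mul_zero', eq_sub_iff_add_eq] at h
  rw [eq_sub_iff_add_eq, h, add_comm]

theorem bstar_zero (a : A) : bstar a 0 = 0 := by simp [bstar, mul_zero']

theorem zero_bstar (a : A) : bstar 0 a = 0 := by simp [bstar, zero_mul']

theorem bstar_add (a b c : A) : bstar a (b + c) = bstar a b + bstar a c := by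
  simp only [bstar, mul_add_eq]; abel

theorem bstar_neg (a b : A) : bstar a (-b) = -bstar a b := by
  simp only [bstar, mul_neg']; abel

theorem bstar_sub (a b c : A) : bstar a (b - c) = bstar a b - bstar a c := by
  rw [sub_eq_add_neg, bstar_add, bstar_neg, ← sub_eq_add_neg]

theorem mul_bstar (a b x : A) :
    bstar (a * b) x = bstar a (bstar b x) + bstar b x + bstar a x := by
  simp only [bstar, sub_eq_add_neg, mul_add_eq, mul_neg', mul_assoc]
  abel

theorem inv_add_self_eq_neg_bstar (a : A) : a⁻¹ + a = -bstar a⁻¹ a := by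
  simp only [bstar, inv_mul_cancel, one_eq_zero]; abel

end Arithmetic

section Subbrace

namespace IsSubbrace

variable {S : Set A}

theorem sub_mem (hS : IsSubbrace S) {a b : A} (ha : a ∈ S) (hb : b ∈ S) : a - b ∈ S := by
  rw [sub_eq_add_neg]; exact hS.add_mem ha (hS.neg_mem hb)

theorem bstar_mem (hS : IsSubbrace S) {a b : A} (ha : a ∈ S) (hb : b ∈ S) : bstar a b ∈ S :=
  hS.sub_mem (hS.sub_mem (hS.mul_mem ha hb) ha) hb

theorem sInter {𝒮 : Set (Set A)} (h𝒮 : ∀ S ∈ 𝒮, IsSubbrace S) : IsSubbrace (⋂₀ 𝒮) where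
  zero_mem := Set.mem_sInter.2 fun S hS => (h𝒮 S hS).zero_mem
  add_mem ha hb := Set.mem_sInter.2 fun S hS =>
    (h𝒮 S hS).add_mem (Set.mem_sInter.1 ha S hS) (Set.mem_sInter.1 hb S hS)
  neg_mem ha := Set.mem_sInter.2 fun S hS => (h𝒮 S hS).neg_mem (Set.mem_sInter.1 ha S hS)
  mul_mem ha hb := Set.mem_sInter.2 fun S hS =>
    (h𝒮 S hS).mul_mem (Set.mem_sInter.1 ha S hS) (Set.mem_sInter.1 hb S hS)
  inv_mem ha := Set.mem_sInter.2 fun S hS => (h𝒮 S hS).inv_mem (Set.mem_sInter.1 ha S hS)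

end IsSubbrace

theorem isSubbrace_univ : IsSubbrace (Set.univ : Set A) :=
  ⟨trivial, fun _ _ => trivial, fun _ => trivial, fun _ _ => trivial, fun _ => trivial⟩

theorem isSubbrace_zero : IsSubbrace ({0} : Set A) where
  zero_mem := rfl
  add_mem ha hb := by rw [ha, hb, add_zero]; rfl
  neg_mem ha := by rw [ha, neg_zero]; rfl
  mul_mem ha hb := by rw [ha, hb, mul_zero']; rfl
  inv_mem ha := by rw [ha, ← one_eq_zero, inv_one]; rfl

theorem isSubbrace_braceClosure (M : Set A) : IsSubbrace (braceClosure M) :=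
  IsSubbrace.sInter fun _ hS => hS.1

theorem braceClosure_subset {M S : Set A} (hS : IsSubbrace S) (hM : M ⊆ S) :
    braceClosure M ⊆ S :=
  Set.sInter_subset_of_mem ⟨hS, hM⟩

end Subbrace

section Ideal

namespace IsIdeal

variable {Z : Set A}

theorem bstar_mem_left (hZ : IsIdeal Z) (a : A) {z : A} (hz : z ∈ Z) : bstar a z ∈ Z :=
  hZ.star_mem_left a trivial z hz

theorem bstar_mem_right (hZ : IsIdeal Z) (a : A) {z : A} (hz : z ∈ Z) : bstar z a ∈ Z :=
  hZ.star_mem_right a trivial z hz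

theorem subset_nextCenter (hZ : IsIdeal Z) : Z ⊆ nextCenter A Z :=
  fun _ hz x => ⟨hZ.bstar_mem_right x hz, hZ.bstar_mem_left x hz⟩

theorem inv_mul_mem (hZ : IsIdeal Z) {s t : A} (h : s - t ∈ Z) : t⁻¹ * s ∈ Z := by
  have : t⁻¹ * s = bstar t⁻¹ (s - t) + (s - t) := by
    conv_lhs => rw [← add_sub_cancel t s]
    rw [mul_add_eq_mul_add_bstar, inv_mul_cancel, one_eq_zero, zero_add]
  rw [this]
  exact hZ.subbrace.add_mem (hZ.bstar_mem_left _ h) h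

end IsIdeal

theorem bstar_sub_bstar_mem {Z W : Set A} (hZ : IsIdeal Z) (hW : IsIdeal W)
    (hWZ : W ⊆ nextCenter A Z) {s s' t t' : A} (hs : s - s' ∈ W) (ht : t - t' ∈ W) :
    bstar s t - bstar s' t' ∈ Z := by
  obtain ⟨w, hw, rfl⟩ : ∃ w ∈ W, s = s' * w :=
    ⟨s'⁻¹ * s, hW.inv_mul_mem hs, (mul_inv_cancel_left s' s).symm⟩
  have : bstar (s' * w) t - bstar s' t' =
      bstar s' (bstar w t) + bstar w t + bstar s' (t - t') := by
    rw [mul_bstar, bstar_sub]; abel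
  rw [this]
  exact hZ.subbrace.add_mem
    (hZ.subbrace.add_mem (hZ.bstar_mem_left s' (hWZ hw t).1) (hWZ hw t).1) (hWZ ht s').2

namespace IsIdeal

variable {Z : Set A}

theorem bstar_congr (hZ : IsIdeal Z) {s s' t t' : A} (hs : s - s' ∈ Z) (ht : t - t' ∈ Z) :
    bstar s t - bstar s' t' ∈ Z :=
  bstar_sub_bstar_mem hZ hZ hZ.subset_nextCenter hs ht

theorem mul_congr (hZ : IsIdeal Z) {s s' t t' : A} (hs : s - s' ∈ Z) (ht : t - t' ∈ Z) :
    s * t - s' * t' ∈ Z := by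
  have : s * t - s' * t' = (bstar s t - bstar s' t') + (s - s') + (t - t') := by
    rw [mul_eq_bstar_add, mul_eq_bstar_add s']; abel
  rw [this]
  exact hZ.subbrace.add_mem (hZ.subbrace.add_mem (hZ.bstar_congr hs ht) hs) ht

theorem inv_congr (hZ : IsIdeal Z) {s t : A} (h : s - t ∈ Z) : s⁻¹ - t⁻¹ ∈ Z := by
  have hst : s⁻¹ * t - s⁻¹ * s ∈ Z := by
    have : t - s ∈ Z := by rw [← neg_sub]; exact hZ.subbrace.neg_mem h
    exact hZ.mul_congr (by rw [sub_self]; exact hZ.subbrace.zero_mem) this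
  rw [inv_mul_cancel, one_eq_zero] at hst
  have h := hZ.mul_congr hst (t := t⁻¹) (sub_self t⁻¹ ▸ hZ.subbrace.zero_mem)
  rwa [mul_inv_cancel_right, zero_mul'] at h

end IsIdeal

theorem isIdeal_zero : IsIdeal ({0} : Set A) where
  subset := Set.subset_univ _
  subbrace := isSubbrace_zero
  ambient_subbrace := isSubbrace_univ
  star_mem_left _ _ _ hz := by rw [hz, bstar_zero]; rfl
  star_mem_right _ _ _ hz := by rw [hz, zero_bstar]; rfl

end Ideal

section NextCenter

variable {Z : Set A}

theorem mem_nextCenter_of_sub_mem (hZ : IsIdeal Z) {a b : A} (ha : a ∈ nextCenter A Z)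
    (h : b - a ∈ Z) : b ∈ nextCenter A Z := fun x => by
  have hx : x - x ∈ Z := by rw [sub_self]; exact hZ.subbrace.zero_mem
  exact ⟨by simpa using hZ.subbrace.add_mem (hZ.bstar_congr h hx) (ha x).1,
    by simpa using hZ.subbrace.add_mem (hZ.bstar_congr hx h) (ha x).2⟩

theorem mul_mem_nextCenter (hZ : IsIdeal Z) {a b : A} (ha : a ∈ nextCenter A Z)
    (hb : b ∈ nextCenter A Z) : a * b ∈ nextCenter A Z := fun x => by
  constructor
  · rw [mul_bstar]
    exact hZ.subbrace.add_mem
      (hZ.subbrace.add_mem (hZ.bstar_mem_left a (hb x).1) (hb x).1) (ha x).1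
  · rw [mul_eq_bstar_add, bstar_add, bstar_add]
    exact hZ.subbrace.add_mem
      (hZ.subbrace.add_mem (hZ.bstar_mem_left x (hb a).2) (ha x).2) (hb x).2

theorem add_mem_nextCenter (hZ : IsIdeal Z) {a b : A} (ha : a ∈ nextCenter A Z)
    (hb : b ∈ nextCenter A Z) : a + b ∈ nextCenter A Z := by
  refine mem_nextCenter_of_sub_mem hZ (mul_mem_nextCenter hZ ha hb) ?_
  have : a + b - a * b = -bstar a b := by rw [mul_eq_bstar_add]; abel
  rw [this]
  exact hZ.subbrace.neg_mem (hb a).2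

theorem inv_mem_nextCenter (hZ : IsIdeal Z) {a : A} (ha : a ∈ nextCenter A Z) :
    a⁻¹ ∈ nextCenter A Z := fun x => by
  constructor
  · have h := mul_bstar a⁻¹ a x
    rw [inv_mul_cancel, one_eq_zero, zero_bstar, eq_comm, add_eq_zero_iff_eq_neg'] at h
    rw [h]
    exact hZ.subbrace.neg_mem
      (hZ.subbrace.add_mem (hZ.bstar_mem_left a⁻¹ (ha x).1) (ha x).1)
  · have : bstar x a⁻¹ = bstar x (a⁻¹ + a) - bstar x a := by rw [bstar_add]; abel
    rw [this, inv_add_self_eq_neg_bstar, bstar_neg]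
    exact hZ.subbrace.sub_mem (hZ.subbrace.neg_mem (hZ.bstar_mem_left x (ha a⁻¹).2)) (ha x).2

theorem neg_mem_nextCenter (hZ : IsIdeal Z) {a : A} (ha : a ∈ nextCenter A Z) :
    -a ∈ nextCenter A Z := by
  refine mem_nextCenter_of_sub_mem hZ (inv_mem_nextCenter hZ ha) ?_
  rw [← neg_add', add_comm, inv_add_self_eq_neg_bstar, neg_neg]
  exact (ha a⁻¹).2

theorem isIdeal_nextCenter (hZ : IsIdeal Z) : IsIdeal (nextCenter A Z) where
  subset := Set.subset_univ _
  subbrace :=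
    { zero_mem := fun x => by
        rw [zero_bstar, bstar_zero]; exact ⟨hZ.subbrace.zero_mem, hZ.subbrace.zero_mem⟩
      add_mem := add_mem_nextCenter hZ
      neg_mem := neg_mem_nextCenter hZ
      mul_mem := mul_mem_nextCenter hZ
      inv_mem := inv_mem_nextCenter hZ }
  ambient_subbrace := isSubbrace_univ
  star_mem_left x _ _ hz := hZ.subset_nextCenter (hz x).2
  star_mem_right x _ _ hz := hZ.subset_nextCenter (hz x).1

end NextCenter

theorem isIdeal_zetaNat : ∀ n : ℕ, IsIdeal (zetaNat A n)
  | 0 => isIdeal_zero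
  | n + 1 => isIdeal_nextCenter (isIdeal_zetaNat n)

section Sum

variable {B Z : Set A}

theorem mem_add_of_sub_mem {b x : A} (hb : b ∈ B) (h : x - b ∈ Z) : x ∈ B + Z :=
  ⟨b, hb, x - b, h, add_sub_cancel b x⟩

namespace IsSubbrace

theorem add_eq_right (hZ : IsSubbrace Z) (h0 : (0 : A) ∈ B) (hBZ : B ⊆ Z) : B + Z = Z :=
  (Set.add_subset_iff.2 fun _ hb _ hz => hZ.add_mem (hBZ hb) hz).antisymm
    fun z hz => ⟨0, h0, z, hz, zero_add z⟩

theorem add_of_isIdeal (hB : IsSubbrace B) (hZ : IsIdeal Z) : IsSubbrace (B + Z) where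
  zero_mem := ⟨0, hB.zero_mem, 0, hZ.subbrace.zero_mem, add_zero 0⟩
  add_mem := by
    rintro _ _ ⟨b, hb, z, hz, rfl⟩ ⟨c, hc, y, hy, rfl⟩
    exact ⟨b + c, hB.add_mem hb hc, z + y, hZ.subbrace.add_mem hz hy, add_add_add_comm b c z y⟩
  neg_mem := by
    rintro _ ⟨b, hb, z, hz, rfl⟩
    exact ⟨-b, hB.neg_mem hb, -z, hZ.subbrace.neg_mem hz, (neg_add b z).symm⟩
  mul_mem := by
    rintro _ _ ⟨b, hb, z, hz, rfl⟩ ⟨c, hc, y, hy, rfl⟩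
    exact mem_add_of_sub_mem (hB.mul_mem hb hc)
      (hZ.mul_congr (by rwa [add_sub_cancel_left]) (by rwa [add_sub_cancel_left]))
  inv_mem := by
    rintro _ ⟨b, hb, z, hz, rfl⟩
    exact mem_add_of_sub_mem (hB.inv_mem hb) (hZ.inv_congr (by rwa [add_sub_cancel_left]))

theorem add_isIdealIn_add_nextCenter (hB : IsSubbrace B) (hZ : IsIdeal Z) :
    IsIdealIn (B + Z) (B + nextCenter A Z) where
  subset := Set.add_subset_add_left hZ.subset_nextCenter
  subbrace := hB.add_of_isIdeal hZ
  ambient_subbrace := hB.add_of_isIdeal (isIdeal_nextCenter hZ)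
  star_mem_left := by
    rintro _ ⟨b', hb', y, hy, rfl⟩ _ ⟨b, hb, z, hz, rfl⟩
    refine mem_add_of_sub_mem (hB.bstar_mem hb' hb)
      (bstar_sub_bstar_mem hZ (isIdeal_nextCenter hZ) subset_rfl ?_ ?_)
    · rwa [add_sub_cancel_left]
    · rw [add_sub_cancel_left]; exact hZ.subset_nextCenter hz
  star_mem_right := by
    rintro _ ⟨b', hb', y, hy, rfl⟩ _ ⟨b, hb, z, hz, rfl⟩
    refine mem_add_of_sub_mem (hB.bstar_mem hb hb')
      (bstar_sub_bstar_mem hZ (isIdeal_nextCenter hZ) subset_rfl ?_ ?_)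
    · rw [add_sub_cancel_left]; exact hZ.subset_nextCenter hz
    · rwa [add_sub_cancel_left]

end IsSubbrace

end Sum

theorem IsTBrace.isIdeal_of_chain (hT : IsTBrace A) {S : ℕ → Set A} :
    ∀ {n : ℕ}, (∀ k < n, IsIdealIn (S k) (S (k + 1))) → IsIdeal (S n) → IsIdeal (S 0)
  | 0, _, h => h
  | n + 1, hS, h =>
    hT.isIdeal_of_chain (fun k hk => hS k (Nat.lt_succ_of_lt hk)) (hT _ _ (hS n n.lt_succ_self) h)

end LeftBrace

open LeftBrace in
/-- **Lemma.** In a T-brace `A`, for every natural `n` and every `a ∈ ζ_n(⋆,A)`,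
the subbrace `br(a)` generated by `a` is an ideal of `A`. -/
theorem braceClosure_isIdeal_of_mem_zetaNat
    {A : Type u} [LeftBrace A] (hT : IsTBrace A) (n : ℕ) (a : A)
    (ha : a ∈ zetaNat A n) :
    IsIdeal (braceClosure {a}) := by
  set B := braceClosure {a}
  have hB : IsSubbrace B := isSubbrace_braceClosure {a}
  have hBZ : B ⊆ zetaNat A n :=
    braceClosure_subset (isIdeal_zetaNat n).subbrace (Set.singleton_subset_iff.2 ha)
  have hBn : B + zetaNat A n = zetaNat A n :=
    (isIdeal_zetaNat n).subbrace.add_eq_right hB.zero_mem hBZ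
  have hB0 : B + zetaNat A 0 = B := by simp [zetaNat]
  have h := hT.isIdeal_of_chain (S := fun k => B + zetaNat A k)
    (fun k _ => hB.add_isIdealIn_add_nextCenter (isIdeal_zetaNat k))
    (hBn ▸ isIdeal_zetaNat n)
  rwa [hB0] at h
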